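/- arXiv:1011.4036 — 3 statements merged into one kernel-verified Lean document; each statement's English description precedes it below -/
import Mathlib

section
/- Let E be a finite subset of Z^p with p > 1, and let Fr(E) be the set of points b in E such that at least one of the 2p points b ± e_1, ..., b ± e_p (where e_j are the standard basis vectors) does not belong to E. Then (#E)^((p-1)/p) ≤ (p-1) · #Fr(E). -/
/-!
Every axis-parallel line through a point of `E` eventually leaves `E`, and its last point in `E`
lies in `Fr E`. So, for counting measure on `ℤ^p`, the indicator of `Fr E` integrates to at least
`1` along every line through a point of `E`, and the Gagliardo–Nirenberg grid-lines inequality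
(`lintegral_prod_lintegral_pow_le`) gives `#E ≤ #Fr(E) ^ (p / (p - 1))`. The factor `p - 1 ≥ 1`
is then free.
-/

open MeasureTheory Function Finset
open scoped ENNReal

lemma MeasureTheory.Measure.pi_count {ι : Type*} [Fintype ι] {α : ι → Type*}
    [∀ i, MeasurableSpace (α i)] [∀ i, MeasurableSingletonClass (α i)] [∀ i, Countable (α i)] :
    Measure.pi (fun i => (Measure.count : Measure (α i))) = Measure.count :=
  Measure.ext_of_singleton fun f => by simp

lemma Finset.lintegral_count_indicator_one {α : Type*} [MeasurableSpace α]
    [MeasurableSingletonClass α] (s : Finset α) :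
    ∫⁻ x, (s : Set α).indicator 1 x ∂Measure.count = #s := by
  rw [lintegral_indicator_one s.finite_toSet.measurableSet, Measure.count_apply_finset]

lemma Function.update_add_single {ι M : Type*} [DecidableEq ι] [AddZeroClass M] (x : ι → M)
    (i : ι) (s t : M) : update x i s + Pi.single i t = update x i (s + t) := by
  ext j
  rcases eq_or_ne j i with rfl | h <;> simp [*]

lemma Finset.exists_update_mem_update_add_one_notMem {ι : Type*} [DecidableEq ι]
    (E : Finset (ι → ℤ)) {x : ι → ℤ} (hx : x ∈ E) (i : ι) :
    ∃ t, update x i t ∈ E ∧ update x i (t + 1) ∉ E := by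
  set T := E.preimage (update x i) (update_injective x i).injOn
  have hT : T.Nonempty := ⟨x i, by simpa [T] using hx⟩
  refine ⟨T.max' hT, by simpa [T] using T.max'_mem hT, fun h => ?_⟩
  have := T.le_max' (T.max' hT + 1) (by simpa [T] using h)
  omega

theorem Finset.card_rpow_le_card_of_forall_exists_update_mem {ι α : Type*} [Fintype ι]
    [DecidableEq ι] [MeasurableSpace α] [MeasurableSingletonClass α] [Countable α]
    (hι : 1 < Fintype.card ι) {E F : Finset (ι → α)}
    (hF : ∀ x ∈ E, ∀ i, ∃ t, update x i t ∈ F) :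
    (#E : ℝ) ^ (((Fintype.card ι : ℝ) - 1) / Fintype.card ι) ≤ #F := by
  set n : ℝ := (Fintype.card ι : ℝ)
  have hn : 1 < n := Nat.one_lt_cast.2 hι
  have hconj : n.HolderConjugate (n / (n - 1)) := Real.HolderConjugate.conjExponent hn
  have grid_lines := lintegral_prod_lintegral_pow_le (fun _ : ι => (Measure.count : Measure α))
    hconj (measurable_of_countable ((F : Set (ι → α)).indicator (1 : (ι → α) → ℝ≥0∞)))
  rw [Measure.pi_count, F.lintegral_count_indicator_one] at grid_lines
  have hE : (#E : ℝ≥0∞) ≤ ∫⁻ x, ∏ i,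
      (∫⁻ t, (F : Set (ι → α)).indicator 1 (update x i t) ∂Measure.count) ^ ((1 : ℝ) / (n - 1))
      ∂Measure.count := by
    rw [← E.lintegral_count_indicator_one]
    refine lintegral_mono fun x => ?_
    by_cases hx : x ∈ E
    · rw [Set.indicator_of_mem (mem_coe.2 hx)]
      refine one_le_prod' fun i _ => ENNReal.one_le_rpow ?_ ?_
      · obtain ⟨t, ht⟩ := hF x hx i
        rw [lintegral_count]
        exact le_of_eq_of_le (by simp [ht]) (ENNReal.le_tsum t)
      · have : 0 < n - 1 := by linarith
        positivity
    · simp [hx]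
  have hEF : (#E : ℝ) ≤ (#F : ℝ) ^ (n / (n - 1)) := by
    have hq : 0 ≤ n / (n - 1) := hconj.symm.nonneg
    have := (ENNReal.toReal_le_toReal (by simp) (ENNReal.rpow_ne_top_of_nonneg hq (by simp))).2
      (hE.trans grid_lines)
    simpa [← ENNReal.toReal_rpow] using this
  rwa [← inv_div, Real.rpow_inv_le_iff_of_pos (by positivity) (by positivity) hconj.symm.pos]

/-- Discrete isoperimetric inequality: for a finite `E ⊆ ℤ^p`, `p > 1`,
`(#E)^((p-1)/p) ≤ (p-1) * #Fr(E)`, where `Fr E` consists of the points `b ∈ E`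
such that `b + e_j ∉ E` or `b - e_j ∉ E` for some standard basis vector `e_j`. -/
theorem stmt0 (p : ℕ) (hp : 1 < p) (E : Finset (Fin p → ℤ))
    (Fr : Finset (Fin p → ℤ))
    (hFr : Fr = E.filter (fun b => ∃ j : Fin p,
      (b + Pi.single j 1) ∉ E ∨ (b - Pi.single j 1) ∉ E)) :
    (E.card : ℝ) ^ (((p : ℝ) - 1) / p) ≤ ((p : ℝ) - 1) * Fr.card := by
  have hline : ∀ x ∈ E, ∀ i, ∃ t, update x i t ∈ Fr := by
    intro x hx i
    obtain ⟨t, htE, ht⟩ := E.exists_update_mem_update_add_one_notMem hx i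
    refine ⟨t, hFr ▸ mem_filter.2 ⟨htE, i, Or.inl ?_⟩⟩
    rwa [update_add_single]
  have hcard := card_rpow_le_card_of_forall_exists_update_mem (by simpa using hp) hline
  rw [Fintype.card_fin] at hcard
  refine hcard.trans (le_mul_of_one_le_left (Nat.cast_nonneg _) ?_)
  have : (2 : ℝ) ≤ p := by exact_mod_cast hp
  linarith
end

section
/- Let A ⊆ R^p be a set of finite type (A − A is discrete) and let R > 0. Choose ε > 0 with ε < min{1, |(a−b) − (c−d)|} over all a,b,c,d ∈ A with |a−b| < 2R+4, |c−d| < 2R+4, and a−b ≠ c−d (in particular ε < |a−b| for distinct a,b ∈ A). Suppose T ∈ R^p satisfies: for every a ∈ A there exists a' ∈ A with |a + T − a'| < ε, and suppose A is relatively dense with the property that every ball of radius R+1 contains a point of A. If a ∈ A and a + T ∈ A, then for every b ∈ A with |a − b| < 2R+3 one has b + T ∈ A. -/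
/-! Pick `b' ∈ A` within `ε` of `b + T`. Then `(a + T) - b'` and `a - b` are two short differences
of `A` lying within `ε` of each other, so the gap condition forces them to coincide, i.e. `b' = b + T`. -/

theorem sub_eq_sub_of_norm_sub_sub_le {E : Type*} [SeminormedAddCommGroup E] {A : Set E}
    {r ε : ℝ}
    (hgap : ∀ a ∈ A, ∀ b ∈ A, ∀ c ∈ A, ∀ d ∈ A,
      ‖a - b‖ < r → ‖c - d‖ < r → a - b ≠ c - d → ε < ‖(a - b) - (c - d)‖)
    {a b c d : E} (ha : a ∈ A) (hb : b ∈ A) (hc : c ∈ A) (hd : d ∈ A)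
    (hab : ‖a - b‖ < r) (hcd : ‖c - d‖ < r) (hclose : ‖(a - b) - (c - d)‖ ≤ ε) :
    a - b = c - d := by
  by_contra hne
  exact (hgap a ha b hb c hc d hd hab hcd hne).not_ge hclose

theorem stmt3_general (p : ℕ) (A : Set (EuclideanSpace ℝ (Fin p))) (R ε : ℝ)
    (hε1 : ε < 1)
    (hgap : ∀ a ∈ A, ∀ b ∈ A, ∀ c ∈ A, ∀ d ∈ A,
      ‖a - b‖ < 2 * R + 4 → ‖c - d‖ < 2 * R + 4 → a - b ≠ c - d →
        ε < ‖(a - b) - (c - d)‖)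
    (T : EuclideanSpace ℝ (Fin p))
    (hT : ∀ a ∈ A, ∃ a' ∈ A, ‖a + T - a'‖ < ε)
    (a : EuclideanSpace ℝ (Fin p)) (ha : a ∈ A) (haT : a + T ∈ A) :
    ∀ b ∈ A, ‖a - b‖ < 2 * R + 3 → b + T ∈ A := by
  intro b hb hab
  obtain ⟨b', hb', hbb'⟩ := hT b hb
  have hdiff : (a + T - b') - (a - b) = b + T - b' := by abel
  have hshort : ‖a + T - b'‖ < 2 * R + 4 :=
    calc ‖a + T - b'‖ = ‖(a - b) + (b + T - b')‖ := by rw [← hdiff, add_sub_cancel]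
      _ ≤ ‖a - b‖ + ‖b + T - b'‖ := norm_add_le _ _
      _ < 2 * R + 4 := by linarith
  have heq : a + T - b' = a - b :=
    sub_eq_sub_of_norm_sub_sub_le hgap haT hb' ha hb hshort (by linarith)
      (by rw [hdiff]; exact hbb'.le)
  have hb'_eq : b' = b + T := by
    rw [eq_comm, ← sub_eq_zero, ← hdiff, heq, sub_self]
  exact hb'_eq ▸ hb'

/-- Propagation of an ε-almost period of a finite-type set: with ε chosen below the
gaps of the difference set at scale `2R+4`, if `T` is an ε-almost period of `A`,
every ball of radius `R+1` meets `A`, and `a, a + T ∈ A`, then `b + T ∈ A` for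
every `b ∈ A` with `|a − b| < 2R + 3`. -/
theorem stmt3 (p : ℕ) (A : Set (EuclideanSpace ℝ (Fin p))) (R ε : ℝ)
    (hR : 0 < R) (hε : 0 < ε) (hε1 : ε < 1)
    (hgap : ∀ a ∈ A, ∀ b ∈ A, ∀ c ∈ A, ∀ d ∈ A,
      ‖a - b‖ < 2 * R + 4 → ‖c - d‖ < 2 * R + 4 → a - b ≠ c - d →
        ε < ‖(a - b) - (c - d)‖)
    (T : EuclideanSpace ℝ (Fin p))
    (hT : ∀ a ∈ A, ∃ a' ∈ A, ‖a + T - a'‖ < ε)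
    (hdense : ∀ x : EuclideanSpace ℝ (Fin p), ∃ a ∈ A, dist x a ≤ R + 1)
    (a : EuclideanSpace ℝ (Fin p)) (ha : a ∈ A) (haT : a + T ∈ A) :
    ∀ b ∈ A, ‖a - b‖ < 2 * R + 3 → b + T ∈ A :=
  stmt3_general p A R ε hε1 hgap T hT a ha haT
end

section
/- Let E be a finite subset of Z^p, p > 1. Then #E ≤ (p−1) · #Fr(E) · (#E)^{1/p}; consequently, if #(E) ≤ N for some N ≥ 1, then #E ≤ (p−1) · #Fr(E) · N^{1/p}. -/
def FrS {p : ℕ} (E : Finset (Fin p → ℤ)) : Finset (Fin p → ℤ) :=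
  E.filter (fun b => ∃ j : Fin p, (b + Pi.single j 1) ∉ E ∨ (b - Pi.single j 1) ∉ E)

lemma single_zero_fin (p : ℕ) :
    (Pi.single (0 : Fin (p+1)) (1:ℤ)) = (Fin.cons 1 0 : Fin (p+1) → ℤ) := by
  funext i
  refine Fin.cases ?_ (fun i => ?_) i
  · simp
  · simp [Pi.single_apply, Fin.succ_ne_zero]

lemma single_succ_fin (p : ℕ) (j : Fin p) :
    (Pi.single (Fin.succ j) (1:ℤ)) = (Fin.cons 0 (Pi.single j 1) : Fin (p+1) → ℤ) := by
  funext i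
  refine Fin.cases ?_ (fun i => ?_) i
  · simp [Pi.single_apply, (Fin.succ_ne_zero j).symm]
  · simp [Pi.single_apply, Fin.succ_inj]

lemma frs_nonempty {p : ℕ} (hp : 0 < p) (E : Finset (Fin p → ℤ)) (hE : E.Nonempty) :
    (FrS E).Nonempty := by
  set j : Fin p := ⟨0, hp⟩
  set T : Finset ℤ := E.image (fun b => b j) with hT
  have hTne : T.Nonempty := hE.image _
  obtain ⟨b, hbE, hbj⟩ := Finset.mem_image.mp (T.max'_mem hTne)
  refine ⟨b, Finset.mem_filter.mpr ⟨hbE, j, Or.inl ?_⟩⟩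
  intro hmem
  have h1 : ((b + Pi.single j 1 : Fin p → ℤ)) j ∈ T := Finset.mem_image_of_mem _ hmem
  simp only [Pi.add_apply, Pi.single_eq_same, hbj] at h1
  have := T.le_max' _ h1
  omega


lemma consAdd {p : ℕ} (a b : ℤ) (u v : Fin p → ℤ) :
    (Fin.cons a u + Fin.cons b v : Fin (p+1) → ℤ) = Fin.cons (a+b) (u+v) :=
  Matrix.cons_add_cons a u b v

lemma consSub {p : ℕ} (a b : ℤ) (u v : Fin p → ℤ) :
    (Fin.cons a u - Fin.cons b v : Fin (p+1) → ℤ) = Fin.cons (a-b) (u-v) :=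
  Matrix.cons_sub_cons a u b v

lemma iso : ∀ (p : ℕ), 1 ≤ p → ∀ E : Finset (Fin p → ℤ), E.Nonempty →
    E.card ^ (p - 1) ≤ (FrS E).card ^ p := by
  refine Nat.le_induction ?_ ?_
  · intro E hE
    simpa using Nat.one_le_iff_ne_zero.mpr
      (Finset.card_ne_zero_of_mem (frs_nonempty one_pos E hE).choose_spec)
  · intro p hp IH E hE
    classical
    simp only [Nat.add_sub_cancel]
    set F := (FrS E).card with hF
    set T : Finset ℤ := E.image (fun b => b 0) with hT
    have hTne : T.Nonempty := hE.image _
    set S : ℤ → Finset (Fin p → ℤ) :=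
      fun t => (E.filter (fun b => b 0 = t)).image Fin.tail with hS
    have hmemS : ∀ t (y : Fin p → ℤ), y ∈ S t ↔ Fin.cons t y ∈ E := by
      intro t y
      constructor
      · intro hy
        obtain ⟨b, hb, rfl⟩ := Finset.mem_image.mp hy
        obtain ⟨hbE, hb0⟩ := Finset.mem_filter.mp hb
        rwa [← hb0, Fin.cons_self_tail]
      · intro h
        exact Finset.mem_image.mpr ⟨Fin.cons t y,
          Finset.mem_filter.mpr ⟨h, Fin.cons_zero _ _⟩, Fin.tail_cons _ _⟩
    -- (1) cardinality decomposition
    have hcardS : ∀ t, (S t).card = (E.filter (fun b => b 0 = t)).card := by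
      intro t
      apply Finset.card_image_of_injOn
      intro a ha b hb hab
      have h0 : a 0 = b 0 := by
        have := (Finset.mem_filter.mp ha).2
        have := (Finset.mem_filter.mp hb).2
        omega
      calc a = Fin.cons (a 0) (Fin.tail a) := (Fin.cons_self_tail a).symm
        _ = Fin.cons (b 0) (Fin.tail b) := by rw [h0, hab]
        _ = b := Fin.cons_self_tail b
    have hsum : E.card = ∑ t ∈ T, (S t).card := by
      rw [Finset.card_eq_sum_card_fiberwise (f := fun b => b 0) (t := T)
        (fun b hb => Finset.mem_image_of_mem _ hb)]
      exact Finset.sum_congr rfl (fun t _ => (hcardS t).symm)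
    have hSne : ∀ t ∈ T, (S t).Nonempty := by
      intro t ht
      obtain ⟨b, hbE, hb0⟩ := Finset.mem_image.mp ht
      exact ⟨Fin.tail b, Finset.mem_image.mpr ⟨b, Finset.mem_filter.mpr ⟨hbE, hb0⟩, rfl⟩⟩
    set C : ℤ → (Fin p → ℤ) → (Fin (p+1) → ℤ) := fun t y => Fin.cons t y with hC
    have hinjC : ∀ t : ℤ, Function.Injective (C t) := by
      intro t a b h
      simp only [hC] at h
      have := congrArg Fin.tail h
      rwa [Fin.tail_cons, Fin.tail_cons] at this
    -- (2) sum of slice frontiers bounded by F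
    have hfr_sub : ∀ t, ((FrS (S t)).image (C t)) ⊆ (FrS E) := by
      intro t x hx
      obtain ⟨y, hy, rfl⟩ := Finset.mem_image.mp hx
      obtain ⟨hyS, j, hj⟩ := Finset.mem_filter.mp hy
      refine Finset.mem_filter.mpr ⟨(hmemS t y).mp hyS, j.succ, ?_⟩
      have hplus : (Fin.cons t y + Pi.single j.succ 1 : Fin (p+1) → ℤ)
          = Fin.cons t (y + Pi.single j 1) := by
        rw [single_succ_fin, consAdd, add_zero]
      have hminus : (Fin.cons t y - Pi.single j.succ 1 : Fin (p+1) → ℤ)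
          = Fin.cons t (y - Pi.single j 1) := by
        rw [single_succ_fin, consSub, sub_zero]
      rcases hj with hj | hj
      · exact Or.inl (by rw [hplus]; exact fun h => hj ((hmemS t _).mpr h))
      · exact Or.inr (by rw [hminus]; exact fun h => hj ((hmemS t _).mpr h))
    have hsumF : ∑ t ∈ T, (FrS (S t)).card ≤ F := by
      have hdisj : ∀ t₁ ∈ T, ∀ t₂ ∈ T, t₁ ≠ t₂ →
          Disjoint ((FrS (S t₁)).image (C t₁)) ((FrS (S t₂)).image (C t₂)) := by
        intro t₁ _ t₂ _ hne
        rw [Finset.disjoint_left]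
        intro x hx₁ hx₂
        obtain ⟨y₁, _, rfl⟩ := Finset.mem_image.mp hx₁
        obtain ⟨y₂, _, he⟩ := Finset.mem_image.mp hx₂
        exact hne (by
          have := congrArg (fun f : Fin (p+1) → ℤ => f 0) he
          simpa [hC] using this.symm)
      calc ∑ t ∈ T, (FrS (S t)).card
          = ∑ t ∈ T, ((FrS (S t)).image (C t)).card := by
            refine Finset.sum_congr rfl (fun t _ => ?_)
            exact (Finset.card_image_of_injective _ (hinjC t)).symm
        _ = (T.biUnion (fun t => (FrS (S t)).image (C t))).card :=
            (Finset.card_biUnion hdisj).symm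
        _ ≤ F := Finset.card_le_card (Finset.biUnion_subset.mpr (fun t _ => hfr_sub t))
    -- (3) each slice cardinality bounded by F
    have hStF : ∀ t ∈ T, (S t).card ≤ F := by
      intro t ht
      set Tx : (Fin p → ℤ) → Finset ℤ :=
        fun x => (E.filter (fun b => Fin.tail b = x)).image (fun b => b 0) with hTx
      set g : (Fin p → ℤ) → (Fin (p+1) → ℤ) :=
        fun x => Fin.cons ((Tx x).max.getD 0) x with hg
      apply Finset.card_le_card_of_injOn g
      · intro x hx
        have hne : (Tx x).Nonempty := by
          refine ⟨t, Finset.mem_image.mpr ⟨Fin.cons t x, Finset.mem_filter.mpr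
            ⟨(hmemS t x).mp hx, Fin.tail_cons _ _⟩, Fin.cons_zero _ _⟩⟩
        obtain ⟨M, hM⟩ := Finset.max_of_nonempty hne
        have hgx : g x = Fin.cons M x := by rw [hg]; simp only [hM]; rfl
        have hMmem : M ∈ Tx x := Finset.mem_of_max hM
        obtain ⟨b, hb, hb0⟩ := Finset.mem_image.mp hMmem
        obtain ⟨hbE, hbtail⟩ := Finset.mem_filter.mp hb
        have hbeq : b = Fin.cons M x := by
          calc b = Fin.cons (b 0) (Fin.tail b) := (Fin.cons_self_tail b).symm
            _ = Fin.cons M x := by rw [hb0, hbtail]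
        refine Finset.mem_filter.mpr ⟨?_, 0, Or.inl ?_⟩
        · rw [hgx, ← hbeq]; exact hbE
        · rw [hgx]
          have hplus : (Fin.cons M x + Pi.single 0 1 : Fin (p+1) → ℤ)
              = Fin.cons (M+1) x := by
            rw [single_zero_fin, consAdd, add_zero]
          rw [hplus]
          intro hmem
          have : (M+1) ∈ Tx x := Finset.mem_image.mpr ⟨Fin.cons (M+1) x,
            Finset.mem_filter.mpr ⟨hmem, Fin.tail_cons _ _⟩, Fin.cons_zero _ _⟩
          have := Finset.le_max this
          rw [hM] at this
          exact absurd (WithBot.coe_le_coe.mp this) (by omega)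
      · intro x hx y hy hxy
        have := congrArg Fin.tail hxy
        rwa [hg, Fin.tail_cons, Fin.tail_cons] at this
    -- (4) real arithmetic
    have hppos : (0:ℝ) < p := by exact_mod_cast hp
    set FR : ℝ := (F : ℝ) with hFR
    have hFRnn : (0:ℝ) ≤ FR := Nat.cast_nonneg F
    have hpoint : ∀ t ∈ T, ((S t).card : ℝ) ≤ ((FrS (S t)).card : ℝ) * FR ^ (1/(p:ℝ)) := by
      intro t ht
      have hIH : ((S t).card : ℝ) ^ (p-1) ≤ ((FrS (S t)).card : ℝ) ^ p := by
        exact_mod_cast IH (S t) (hSne t ht)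
      have haF : ((S t).card : ℝ) ≤ FR := by rw [hFR]; exact_mod_cast hStF t ht
      have hpow : ((S t).card : ℝ) ^ p ≤ (((FrS (S t)).card : ℝ) * FR ^ (1/(p:ℝ))) ^ p := by
        have hsplit : ∀ a : ℝ, a ^ p = a ^ (p-1) * a := by
          intro a
          conv_lhs => rw [← Nat.sub_add_cancel hp]
          rw [pow_succ]
        have hFRp : (FR ^ (1/(p:ℝ))) ^ p = FR := by
          rw [← Real.rpow_natCast (FR ^ (1/(p:ℝ))) p, ← Real.rpow_mul hFRnn,
            one_div, inv_mul_cancel₀ hppos.ne', Real.rpow_one]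
        rw [mul_pow, hFRp, hsplit ((S t).card : ℝ)]
        exact mul_le_mul hIH haF (Nat.cast_nonneg _) (by positivity)
      exact (pow_le_pow_iff_left₀ (Nat.cast_nonneg _) (by positivity) (by omega)).mp hpow
    have hEF : (E.card : ℝ) ≤ FR * FR ^ (1/(p:ℝ)) := by
      have h1 : (E.card : ℝ) = ∑ t ∈ T, ((S t).card : ℝ) := by
        rw [hsum]; push_cast; ring
      have h2 : ∑ t ∈ T, ((S t).card : ℝ) ≤ ∑ t ∈ T, ((FrS (S t)).card : ℝ) * FR ^ (1/(p:ℝ)) :=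
        Finset.sum_le_sum hpoint
      have h3 : ∑ t ∈ T, ((FrS (S t)).card : ℝ) * FR ^ (1/(p:ℝ))
          = (∑ t ∈ T, ((FrS (S t)).card : ℝ)) * FR ^ (1/(p:ℝ)) := by
        rw [Finset.sum_mul]
      have h4 : (∑ t ∈ T, ((FrS (S t)).card : ℝ)) ≤ FR := by rw [hFR]; push_cast; exact_mod_cast hsumF
      rw [h1]
      calc ∑ t ∈ T, ((S t).card : ℝ) ≤ (∑ t ∈ T, ((FrS (S t)).card : ℝ)) * FR ^ (1/(p:ℝ)) := by
            rw [← h3]; exact h2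
        _ ≤ FR * FR ^ (1/(p:ℝ)) := mul_le_mul_of_nonneg_right h4 (by positivity)
    have hfinal : (E.card : ℝ) ^ p ≤ FR ^ (p+1) := by
      have hFRp : (FR ^ (1/(p:ℝ))) ^ p = FR := by
        rw [← Real.rpow_natCast (FR ^ (1/(p:ℝ))) p, ← Real.rpow_mul hFRnn,
          one_div, inv_mul_cancel₀ hppos.ne', Real.rpow_one]
      calc (E.card : ℝ) ^ p ≤ (FR * FR ^ (1/(p:ℝ))) ^ p :=
            pow_le_pow_left₀ (Nat.cast_nonneg _) hEF p
        _ = FR ^ p * FR := by rw [mul_pow, hFRp]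
        _ = FR ^ (p+1) := (pow_succ FR p).symm
    rw [hFR] at hfinal
    exact_mod_cast hfinal

/-- Multiplied form of the discrete isoperimetric inequality: for finite `E ⊆ ℤ^p`,
`p > 1`, one has `#E ≤ (p−1) · #Fr(E) · (#E)^{1/p}`; consequently, if `#E ≤ N`
(with `N ≥ 1`) then `#E ≤ (p−1) · #Fr(E) · N^{1/p}`. -/
theorem stmt13 (p : ℕ) (hp : 1 < p) (N : ℕ) (hN : 1 ≤ N)
    (E : Finset (Fin p → ℤ)) (Fr : Finset (Fin p → ℤ))
    (hFr : Fr = E.filter (fun b => ∃ j : Fin p,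
      (b + Pi.single j 1) ∉ E ∨ (b - Pi.single j 1) ∉ E)) :
    (E.card : ℝ) ≤ ((p : ℝ) - 1) * Fr.card * (E.card : ℝ) ^ (1 / (p : ℝ)) ∧
      (E.card ≤ N →
        (E.card : ℝ) ≤ ((p : ℝ) - 1) * Fr.card * (N : ℝ) ^ (1 / (p : ℝ))) := by
  have hFr' : Fr = FrS E := hFr
  rcases E.eq_empty_or_nonempty with rfl | hE
  · constructor <;> [skip; intro _] <;> simp [hFr', FrS]
  have hiso := iso p hp.le E hE
  have hEpos : (0:ℝ) < E.card := by exact_mod_cast Finset.card_pos.mpr hE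
  have hFpos : (0:ℝ) < Fr.card := by
    rw [hFr']
    exact_mod_cast Finset.card_pos.mpr (frs_nonempty (by omega) E hE)
  have hppos : (0:ℝ) < p := by exact_mod_cast Nat.zero_lt_of_lt hp
  have hp2 : (2:ℝ) ≤ p := by exact_mod_cast hp
  have h2 : ((E.card : ℝ) ^ ((p:ℝ) - 1)) ≤ (Fr.card:ℝ) ^ (p:ℝ) := by
    have h1 : ((E.card : ℝ) ^ (p - 1 : ℕ)) ≤ (Fr.card:ℝ) ^ (p:ℕ) := by
      rw [hFr']; exact_mod_cast hiso
    rw [← Real.rpow_natCast (E.card:ℝ) (p-1), ← Real.rpow_natCast (Fr.card:ℝ) p] at h1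
    rwa [Nat.cast_sub hp.le, Nat.cast_one] at h1
  have h3 : (E.card:ℝ) ^ (((p:ℝ)-1) * (1/(p:ℝ))) ≤ (Fr.card:ℝ) ^ ((p:ℝ) * (1/(p:ℝ))) := by
    rw [Real.rpow_mul hEpos.le, Real.rpow_mul hFpos.le]
    exact Real.rpow_le_rpow (by positivity) h2 (by positivity)
  rw [mul_one_div, mul_one_div, div_self hppos.ne', Real.rpow_one] at h3
  have hsum : ((p:ℝ)-1)/(p:ℝ) + 1/(p:ℝ) = 1 := by field_simp; ring
  have hEsplit : (E.card:ℝ) = (E.card:ℝ) ^ (((p:ℝ)-1)/(p:ℝ)) * (E.card:ℝ) ^ (1/(p:ℝ)) := by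
    rw [← Real.rpow_add hEpos, hsum, Real.rpow_one]
  have hkey : (E.card : ℝ) ≤ (Fr.card : ℝ) * (E.card : ℝ) ^ (1 / (p:ℝ)) := by
    calc (E.card:ℝ) = (E.card:ℝ) ^ (((p:ℝ)-1)/(p:ℝ)) * (E.card:ℝ) ^ (1/(p:ℝ)) := hEsplit
      _ ≤ (Fr.card : ℝ) * (E.card : ℝ) ^ (1 / (p:ℝ)) :=
          mul_le_mul_of_nonneg_right h3 (Real.rpow_nonneg (Nat.cast_nonneg _) _)
  have hfac : (Fr.card:ℝ) ≤ ((p:ℝ)-1) * Fr.card := by nlinarith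
  constructor
  · calc (E.card:ℝ) ≤ (Fr.card:ℝ) * (E.card:ℝ) ^ (1/(p:ℝ)) := hkey
      _ ≤ ((p:ℝ)-1) * Fr.card * (E.card:ℝ) ^ (1/(p:ℝ)) :=
          mul_le_mul_of_nonneg_right hfac (Real.rpow_nonneg (Nat.cast_nonneg _) _)
  · intro hEN
    have hmono : (E.card:ℝ) ^ (1/(p:ℝ)) ≤ (N:ℝ) ^ (1/(p:ℝ)) :=
      Real.rpow_le_rpow hEpos.le (by exact_mod_cast hEN) (by positivity)
    calc (E.card:ℝ) ≤ (Fr.card:ℝ) * (E.card:ℝ) ^ (1/(p:ℝ)) := hkey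
      _ ≤ ((p:ℝ)-1) * Fr.card * (N:ℝ) ^ (1/(p:ℝ)) :=
          mul_le_mul hfac hmono (Real.rpow_nonneg (Nat.cast_nonneg _) _) (mul_nonneg (by linarith) hFpos.le)
end
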